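/- arXiv:2303.08865 — 4 statements merged into one kernel-verified Lean document; each statement's English description precedes it below -/
import Mathlib

section
/- There exists no linear map Ξ : ℂ^{2×2} → ℂ² (viewing ℂ^{2×2} as ℂ² ⊗ ℂ²) such that for all nonzero v ∈ ℂ², both the maps w ↦ Ξ(w ⊗ v) and w ↦ Ξ(v ⊗ w) are invertible (bijective linear maps ℂ² → ℂ²). -/
/-- There is no linear map `Ξ : ℂ^{2×2} → ℂ²` such that for every nonzero `v ∈ ℂ²`
both `w ↦ Ξ(w ⊗ v)` and `w ↦ Ξ(v ⊗ w)` are bijective, where `v ⊗ w` is identified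
with the rank-one matrix `v wᵀ` (`Matrix.vecMulVec v w`). -/
theorem stmt_1 :
    ¬ ∃ Ξ : Matrix (Fin 2) (Fin 2) ℂ →ₗ[ℂ] (Fin 2 → ℂ),
      ∀ v : Fin 2 → ℂ, v ≠ 0 →
        Function.Bijective (fun w : Fin 2 → ℂ => Ξ (Matrix.vecMulVec w v)) ∧
        Function.Bijective (fun w : Fin 2 → ℂ => Ξ (Matrix.vecMulVec v w)) := by
  rintro ⟨Ξ, hΞ⟩
  -- linear map w ↦ vecMulVec w v
  have vmv_lin : ∀ v : Fin 2 → ℂ, ∃ L : (Fin 2 → ℂ) →ₗ[ℂ] Matrix (Fin 2) (Fin 2) ℂ,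
      ∀ w, L w = Matrix.vecMulVec w v := by
    intro v
    refine ⟨⟨⟨fun w => Matrix.vecMulVec w v, ?_⟩, ?_⟩, fun w => rfl⟩
    · intro a b; ext i j; simp [Matrix.vecMulVec]; ring
    · intro c a; ext i j; simp [Matrix.vecMulVec]; ring
  obtain ⟨L0, hL0⟩ := vmv_lin ![1, 0]
  obtain ⟨L1, hL1⟩ := vmv_lin ![0, 1]
  set A : Module.End ℂ (Fin 2 → ℂ) := Ξ ∘ₗ L0 with hA
  set B : Module.End ℂ (Fin 2 → ℂ) := Ξ ∘ₗ L1 with hB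
  have e0ne : (![1, 0] : Fin 2 → ℂ) ≠ 0 := by
    intro h; have := congrFun h 0; simp at this
  have e1ne : (![0, 1] : Fin 2 → ℂ) ≠ 0 := by
    intro h; have := congrFun h 1; simp at this
  have hAfun : (fun w : Fin 2 → ℂ => Ξ (Matrix.vecMulVec w ![1, 0])) = ⇑A := by
    funext w; simp only [hA, LinearMap.comp_apply, hL0]
  have hBfun : (fun w : Fin 2 → ℂ => Ξ (Matrix.vecMulVec w ![0, 1])) = ⇑B := by
    funext w; simp only [hB, LinearMap.comp_apply, hL1]
  have hAbij : Function.Bijective A := hAfun ▸ (hΞ _ e0ne).1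
  have hBbij : Function.Bijective B := hBfun ▸ (hΞ _ e1ne).1
  -- bilinearity decomposition
  have key : ∀ (v : Fin 2 → ℂ) (w : Fin 2 → ℂ),
      Ξ (Matrix.vecMulVec w v) = v 0 • A w + v 1 • B w := by
    intro v w
    have hdecomp : Matrix.vecMulVec w v
        = v 0 • Matrix.vecMulVec w ![1, 0] + v 1 • Matrix.vecMulVec w ![0, 1] := by
      ext i j
      fin_cases j <;> simp [Matrix.vecMulVec] <;> ring
    rw [hdecomp, map_add, map_smul, map_smul]
    simp [hA, hB, LinearMap.comp_apply, hL0, hL1]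
  -- eigenvalue of A⁻¹ B
  let Aeq : (Fin 2 → ℂ) ≃ₗ[ℂ] (Fin 2 → ℂ) := LinearEquiv.ofBijective A hAbij
  let C : Module.End ℂ (Fin 2 → ℂ) := (Aeq.symm : (Fin 2 → ℂ) →ₗ[ℂ] (Fin 2 → ℂ)) ∘ₗ B
  obtain ⟨μ, hμ⟩ := Module.End.exists_eigenvalue C
  obtain ⟨x, hx⟩ := hμ.exists_hasEigenvector
  have hxne : x ≠ 0 := hx.right
  have hCx : C x = μ • x := hx.apply_eq_smul
  have hBx : B x = μ • A x := by
    have : Aeq.symm (B x) = μ • x := hCx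
    have h2 : B x = Aeq (μ • x) := by
      rw [← this]; simp
    rw [h2, map_smul]; rfl
  -- now v = ![μ, -1] kills x
  have hvne : (![μ, -1] : Fin 2 → ℂ) ≠ 0 := by
    intro h; have := congrFun h 1; simp at this
  have hzero : Ξ (Matrix.vecMulVec x ![μ, -1]) = 0 := by
    rw [key]
    simp [hBx]
  have hinj := (hΞ _ hvne).1.injective
  have : x = (0 : Fin 2 → ℂ) := by
    apply hinj
    simp only [hzero]
    rw [key]
    simp
  exact hxne this
end

section
/- Let V be a finite set and let zwt_V : 𝔽₂^V-indexed Pauli strings → ℕ count the number of positions at which a Pauli string equals Z. Let 𝒮 be the stabiliser group of a graph state on a graph G = (V,E), generated by S_v = X(v)∏_{w∈N(v)} Z(w). Then for the canonical generators, zwt_V(S_v) ≡ deg(v) (mod 2), and for any element S = ∏_{v∈W} S_v, zwt_V(S) ≡ Σ_{v∈W} deg(v) (mod 2). In particular zwt_V is additive mod 2 on products of canonical generators: zwt_V(S S') ≡ zwt_V(S) + zwt_V(S') (mod 2) for all S, S' ∈ 𝒮. -/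
/-!
Modulo 2, counting the vertices `u ∉ W` with `|N(u) ∩ W|` odd is the same as summing
`|N(u) ∩ W|` over `u ∉ W`. Adding the same sum over `u ∈ W`, which counts every edge inside `W`
twice and so vanishes, gives `∑_u |N(u) ∩ W| = ∑_{w ∈ W} deg w` by double counting. Additivity
under symmetric difference then holds because in characteristic `2` the sum over `s ∆ t` is the
sum over `s` plus the sum over `t`, the common part `s ∩ t` being counted twice.
-/

/-- The stabiliser `∏_{v ∈ W} S_v` of the graph state of `G`, as a Pauli string
(phases ignored): it has a `Z` at `u` iff `u ∉ W` and `|N(u) ∩ W|` is odd. -/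
def zwtStab {V : Type} [Fintype V] [DecidableEq V]
    (G : SimpleGraph V) [DecidableRel G.Adj] (W : Finset V) : ℕ :=
  (Finset.univ.filter (fun u => u ∉ W ∧ Odd ((W.filter (G.Adj u)).card))).card

open Finset

namespace Finset

variable {α R : Type*} [Ring R] [CharP R 2]

theorem natCast_card_filter_odd (s : Finset α) (f : α → ℕ) :
    (#{a ∈ s | Odd (f a)} : R) = ∑ a ∈ s, (f a : R) := by
  rw [← sum_boole]
  refine sum_congr rfl fun a _ => ?_
  simp only [CharTwo.natCast_eq_ite, ← Nat.not_odd_iff_even, ite_not]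

theorem sum_symmDiff [DecidableEq α] (s t : Finset α) (f : α → R) :
    ∑ a ∈ symmDiff s t, f a = ∑ a ∈ s, f a + ∑ a ∈ t, f a := by
  calc ∑ a ∈ symmDiff s t, f a
      = ∑ a ∈ symmDiff s t, f a + (∑ a ∈ s ∩ t, f a + ∑ a ∈ s ∩ t, f a) := by
        rw [CharTwo.add_self_eq_zero, add_zero]
    _ = ∑ a ∈ s ∪ t, f a + ∑ a ∈ s ∩ t, f a := by
        rw [← add_assoc, symmDiff_eq_sup_sdiff_inf, sup_eq_union, inf_eq_inter,
          sum_sdiff inter_subset_union]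
    _ = ∑ a ∈ s, f a + ∑ a ∈ t, f a := sum_union_inter

theorem sum_sum_eq_zero_of_symm (s : Finset α) {f : α → α → R}
    (hsymm : ∀ a b, f a b = f b a) (hdiag : ∀ a, f a a = 0) :
    ∑ a ∈ s, ∑ b ∈ s, f a b = 0 := by
  rw [← sum_product']
  refine sum_involution (fun p _ => p.swap) (fun p _ => ?_) (fun p _ hp hswap => ?_)
    (fun p hp => mem_product.2 (mem_product.1 hp).symm) (fun p _ => p.swap_swap)
  · rw [Prod.fst_swap, Prod.snd_swap, hsymm p.2, CharTwo.add_self_eq_zero]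
  · have hp12 : p.1 = p.2 := congrArg Prod.snd hswap
    exact hp (hp12 ▸ hdiag p.1)

end Finset

namespace SimpleGraph

theorem natCast_sum_card_filter_adj_eq_zero {V R : Type*} [Ring R] [CharP R 2]
    (G : SimpleGraph V) [DecidableRel G.Adj] (W : Finset V) :
    ∑ u ∈ W, (#{w ∈ W | G.Adj u w} : R) = 0 := by
  simp_rw [← sum_boole]
  exact sum_sum_eq_zero_of_symm W (fun u w => by simp only [G.adj_comm]) (by simp)

variable {V : Type*} [Fintype V] (G : SimpleGraph V) [DecidableRel G.Adj]

theorem sum_card_filter_adj (W : Finset V) :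
    ∑ u, #{w ∈ W | G.Adj u w} = ∑ w ∈ W, G.degree w := by
  refine (sum_card_bipartiteAbove_eq_sum_card_bipartiteBelow G.Adj).trans <|
    sum_congr rfl fun w _ => ?_
  simp only [bipartiteBelow, ← card_neighborFinset_eq_degree, neighborFinset_eq_filter, G.adj_comm]

end SimpleGraph

theorem natCast_zwtStab {V : Type} [Fintype V] [DecidableEq V]
    (G : SimpleGraph V) [DecidableRel G.Adj] (W : Finset V) :
    (zwtStab G W : ZMod 2) = ∑ v ∈ W, (G.degree v : ZMod 2) := by
  have hcompl : zwtStab G W = #{u ∈ Wᶜ | Odd #{w ∈ W | G.Adj u w}} := by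
    rw [zwtStab, ← filter_filter, filter_not, filter_mem_eq_inter, univ_inter,
      ← compl_eq_univ_sdiff]
  rw [hcompl, natCast_card_filter_odd, ← add_zero (∑ u ∈ Wᶜ, _),
    ← G.natCast_sum_card_filter_adj_eq_zero W, sum_compl_add_sum, ← Nat.cast_sum,
    G.sum_card_filter_adj, Nat.cast_sum]

/-- For canonical generators, `zwt_V(S_v) ≡ deg(v) (mod 2)`; for a general element
`S = ∏_{v∈W} S_v`, `zwt_V(S) ≡ Σ_{v∈W} deg(v) (mod 2)`; and `zwt_V` is additive mod 2
on the stabiliser group: `zwt_V(S S') ≡ zwt_V(S) + zwt_V(S') (mod 2)` (where the product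
`S S'` corresponds to the symmetric difference of index sets). -/
theorem stmt_7 (V : Type) [Fintype V] [DecidableEq V]
    (G : SimpleGraph V) [DecidableRel G.Adj] :
    (∀ v : V, (zwtStab G {v} : ZMod 2) = (G.degree v : ZMod 2)) ∧
    (∀ W : Finset V, (zwtStab G W : ZMod 2) = ∑ v ∈ W, (G.degree v : ZMod 2)) ∧
    (∀ W W' : Finset V,
      (zwtStab G (symmDiff W W') : ZMod 2) = (zwtStab G W : ZMod 2) + (zwtStab G W' : ZMod 2)) := by
  refine ⟨fun v => ?_, natCast_zwtStab G, fun W W' => ?_⟩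
  · rw [natCast_zwtStab, sum_singleton]
  · rw [natCast_zwtStab, natCast_zwtStab, natCast_zwtStab, sum_symmDiff]
end

section
/- Iterated correctness of collaborative remote state preparation: let θ₁, …, θₙ ∈ ℝ and prepare qubits |+_{θ_j}⟩ for j = 1,…,n. For each j ≠ n, apply CNOT with qubit n as control and qubit j as target, then measure qubit j in the computational basis with outcome t_j ∈ {0,1}. Then the remaining qubit n is in the state |+_{θ'}⟩ (up to global phase) with θ' = θₙ + Σ_{j=1}^{n−1} (−1)^{t_j} θ_j. -/
open Complex

/-!
Writing `|+_γ⟩` as `a ↦ e^{iγa}/√2`, the CNOT-and-measure step with outcome `t` multiplies the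
control's amplitude at `a` by `⟨t + a | +_γ⟩ = ⟨t | +_γ⟩ · e^{i(−1)^t γ a}`, i.e. it applies the
phase gate `Z((−1)^t γ)` up to the constant `⟨t | +_γ⟩`. Phase gates compose additively, so the
`m` steps together rotate `|+_{θₙ}⟩` to `|+_{θₙ + Σ (−1)^{t_j} θ_j}⟩`.
-/

noncomputable section

namespace RemoteStatePrep

def phase (γ : ℝ) (b : Fin 2) : ℂ := exp (γ * (b : ℕ) * I)

def plusState (γ : ℝ) (b : Fin 2) : ℂ := phase γ b / Real.sqrt 2

lemma phase_add (γ δ : ℝ) (b : Fin 2) : phase (γ + δ) b = phase γ b * phase δ b := by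
  simp only [phase, ← exp_add]
  push_cast
  ring_nf

lemma phase_sum {ι : Type*} (s : Finset ι) (γ : ι → ℝ) (b : Fin 2) :
    phase (∑ i ∈ s, γ i) b = ∏ i ∈ s, phase (γ i) b := by
  simp only [phase, ← exp_sum]
  push_cast
  rw [Finset.sum_mul, Finset.sum_mul]

lemma phase_add_index (γ : ℝ) (t a : Fin 2) :
    phase γ (t + a) = phase γ t * phase ((-1) ^ (t : ℕ) * γ) a := by
  simp only [phase, ← exp_add]
  fin_cases t <;> fin_cases a <;> simp

lemma plusState_ne_zero (γ : ℝ) (b : Fin 2) : plusState γ b ≠ 0 :=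
  div_ne_zero (exp_ne_zero _) (by exact_mod_cast (Real.sqrt_pos.2 two_pos).ne')

lemma plusState_add_index (γ : ℝ) (t a : Fin 2) :
    plusState γ (t + a) = plusState γ t * phase ((-1) ^ (t : ℕ) * γ) a := by
  rw [plusState, plusState, phase_add_index, mul_div_right_comm]

lemma prod_plusState_add_index_mul {ι : Type*} [Fintype ι] (θ : ι → ℝ) (θn : ℝ)
    (t : ι → Fin 2) (a : Fin 2) :
    (∏ j, plusState (θ j) (t j + a)) * plusState θn a =
      (∏ j, plusState (θ j) (t j)) * plusState (θn + ∑ j, (-1) ^ (t j : ℕ) * θ j) a := by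
  rw [Finset.prod_congr rfl fun j _ => plusState_add_index (θ j) (t j) a, Finset.prod_mul_distrib,
    plusState, plusState, phase_add, phase_sum]
  ring

end RemoteStatePrep

open RemoteStatePrep in
/-- Iterated correctness of collaborative remote state preparation.
`plus γ` is the qubit state `|+_γ⟩ = (|0⟩ + e^{iγ}|1⟩)/√2`.  Starting from
`⊗_{j<m} |+_{θ j}⟩ ⊗ |+_{θₙ}⟩`, applying a CNOT with the last qubit as control and
each qubit `j` as target and then measuring qubit `j` in the computational basis with
outcome `t j` leaves the last qubit (up to global phase and normalization) in the state
`|+_{θ'}⟩` with `θ' = θₙ + Σ_j (−1)^{t j} θ j`.  The unnormalized post-measurement state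
of the control is `a ↦ (∏_j plus (θ j) (t j + a)) * plus θₙ a`. -/
theorem stmt_14 (m : ℕ) (θ : Fin m → ℝ) (θn : ℝ) (t : Fin m → Fin 2) :
    let plus : ℝ → Fin 2 → ℂ :=
      fun γ b => Complex.exp (γ * (b : ℕ) * Complex.I) / Real.sqrt 2
    let res : Fin 2 → ℂ := fun a => (∏ j, plus (θ j) (t j + a)) * plus θn a
    let θ' : ℝ := θn + ∑ j, (-1 : ℝ) ^ ((t j : ℕ)) * θ j
    ∃ c : ℂ, c ≠ 0 ∧ res = c • plus θ' :=
  ⟨∏ j, plusState (θ j) (t j), Finset.prod_ne_zero_iff.2 fun _ _ => plusState_ne_zero _ _,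
    funext fun a => prod_plusState_add_index_mul θ θn t a⟩

end
end

section
/- Even-degree error detection bound: let 𝒟 be a distribution over independent sets of a graph G such that each vertex is included with probability at least 1/χ_f(G) (the fractional chromatic number). Sample I ← 𝒟, set V₂ = I ∩ V_even, and sample a uniformly random subset V₃ ⊆ V₂. For an error with support S ⊆ V with S ∩ V_even ≠ ∅, if conditioned on S ∩ V₂ ≠ ∅ the uniformly random subset V₃ of V₂ satisfies |S ∩ V₃| odd with probability exactly 1/2, then the overall probability of detecting the error (i.e. of |S ∩ V₃| being odd) is at least 1/(2 χ_f(G)). -/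
lemma parity_count {V : Type} [DecidableEq V] (S T : Finset V) (v : V)
    (hvS : v ∈ S) (hvT : v ∈ T) :
    (T.powerset.filter (fun U => Odd ((S ∩ U).card))).card * 2 = 2 ^ T.card := by
  classical
  have key : ∀ U ∈ T.powerset, (if v ∈ U then U.erase v else insert v U) ∈ T.powerset ∧
      (Odd ((S ∩ (if v ∈ U then U.erase v else insert v U)).card) ↔ ¬ Odd ((S ∩ U).card)) := by
    intro U hU
    rw [Finset.mem_powerset] at hU
    by_cases h : v ∈ U
    · simp only [h, if_true]
      constructor
      · exact Finset.mem_powerset.2 ((Finset.erase_subset v U).trans hU)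
      · have h1 : S ∩ U.erase v = (S ∩ U).erase v := by
          ext x; simp [Finset.mem_erase, Finset.mem_inter]; tauto
        have hv : v ∈ S ∩ U := Finset.mem_inter.2 ⟨hvS, h⟩
        have h2 : ((S ∩ U).erase v).card + 1 = (S ∩ U).card := Finset.card_erase_add_one hv
        rw [h1, ← h2, Nat.odd_add_one, not_not]
    · simp only [h, if_false]
      constructor
      · exact Finset.mem_powerset.2 (Finset.insert_subset hvT hU)
      · have h1 : S ∩ insert v U = insert v (S ∩ U) := by
          ext x; constructor <;> intro hx <;> simp_all [Finset.mem_insert, Finset.mem_inter]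
        have hv : v ∉ S ∩ U := fun hx => h (Finset.mem_inter.1 hx).2
        rw [h1, Finset.card_insert_of_notMem hv, Nat.odd_add_one]
  have inv : ∀ U : Finset V, (if v ∈ (if v ∈ U then U.erase v else insert v U) then
      Finset.erase (if v ∈ U then U.erase v else insert v U) v
      else insert v (if v ∈ U then U.erase v else insert v U)) = U := by
    intro U
    by_cases h : v ∈ U
    · simp [h, Finset.insert_erase h]
    · simp [h, Finset.erase_insert h]
  have hbij : (T.powerset.filter (fun U => Odd ((S ∩ U).card))).card
      = (T.powerset.filter (fun U => ¬ Odd ((S ∩ U).card))).card := by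
    apply Finset.card_bij' (fun U _ => if v ∈ U then U.erase v else insert v U)
      (fun U _ => if v ∈ U then U.erase v else insert v U)
    case left_inv => intro U _; exact inv U
    case right_inv => intro U _; exact inv U
    case hi =>
      intro U hU
      rw [Finset.mem_filter] at hU ⊢
      obtain ⟨h1, h2⟩ := key U hU.1
      exact ⟨h1, fun h => (h2.1 h) hU.2⟩
    case hj =>
      intro U hU
      rw [Finset.mem_filter] at hU ⊢
      obtain ⟨h1, h2⟩ := key U hU.1
      exact ⟨h1, h2.2 hU.2⟩
  have := Finset.card_filter_add_card_filter_not
    (s := T.powerset) (p := fun U => Odd ((S ∩ U).card))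
  rw [← hbij] at this
  rw [Finset.card_powerset] at this
  omega


/-- Even-degree error detection bound.  Let `𝒟` be a distribution over independent
sets of `G` covering each vertex with probability at least `1/χf` (with `χf` the
fractional chromatic number, `χf ≥ 1`).  Sample `I ← 𝒟`, set `V₂ = I ∩ V_even`,
sample a uniformly random subset `V₃ ⊆ V₂`, and detect the error with support `S`
(where `S ∩ V_even ≠ ∅`) iff `|S ∩ V₃|` is odd.  Then the overall detection
probability is at least `1/(2 χf)`. -/
theorem stmt_18 (V : Type) [Fintype V] [DecidableEq V]
    (G : SimpleGraph V) [DecidableRel G.Adj]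
    (𝒟 : Finset V → ℝ) (hpos : ∀ I, 0 ≤ 𝒟 I) (hsum : ∑ I : Finset V, 𝒟 I = 1)
    (hind : ∀ I : Finset V, 𝒟 I ≠ 0 → ∀ a ∈ I, ∀ b ∈ I, ¬ G.Adj a b)
    (χf : ℝ) (hχf : 1 ≤ χf)
    (hcover : ∀ v : V, (1 : ℝ) / χf ≤ ∑ I ∈ Finset.univ.filter (fun I : Finset V => v ∈ I), 𝒟 I)
    (S : Finset V)
    (hS : (S ∩ Finset.univ.filter (fun v => Even (G.degree v))).Nonempty) :
    let Veven : Finset V := Finset.univ.filter (fun v => Even (G.degree v))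
    (1 : ℝ) / (2 * χf) ≤
      ∑ I : Finset V, 𝒟 I *
        ((((I ∩ Veven).powerset.filter (fun U => Odd ((S ∩ U).card))).card : ℝ)
          / 2 ^ (I ∩ Veven).card) := by
  intro Veven
  obtain ⟨v, hv⟩ := hS
  rw [Finset.mem_inter] at hv
  have hχ0 : (0:ℝ) < χf := lt_of_lt_of_le one_pos hχf
  have key : ∀ I : Finset V,
      𝒟 I * (if v ∈ I then (1/2 : ℝ) else 0) ≤ 𝒟 I *
        ((((I ∩ Veven).powerset.filter (fun U => Odd ((S ∩ U).card))).card : ℝ)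
          / 2 ^ (I ∩ Veven).card) := by
    intro I
    by_cases h : v ∈ I
    · simp only [h, if_true]
      apply mul_le_mul_of_nonneg_left _ (hpos I)
      have hvT : v ∈ I ∩ Veven := Finset.mem_inter.2 ⟨h, hv.2⟩
      have hc := parity_count S (I ∩ Veven) v hv.1 hvT
      have hcR : ((((I ∩ Veven).powerset.filter (fun U => Odd ((S ∩ U).card))).card : ℝ)) * 2
          = 2 ^ (I ∩ Veven).card := by exact_mod_cast hc
      have hp : (0:ℝ) < 2 ^ (I ∩ Veven).card := by positivity
      rw [le_div_iff₀ hp]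
      linarith
    · simp only [h, if_false, mul_zero]
      have : (0:ℝ) ≤ ((((I ∩ Veven).powerset.filter (fun U => Odd ((S ∩ U).card))).card : ℝ)
          / 2 ^ (I ∩ Veven).card) := by positivity
      exact mul_nonneg (hpos I) this
  calc (1:ℝ)/(2*χf) = (1/2) * (1/χf) := by field_simp
    _ ≤ (1/2) * ∑ I ∈ Finset.univ.filter (fun I : Finset V => v ∈ I), 𝒟 I := by
        have := hcover v; linarith
    _ = ∑ I : Finset V, 𝒟 I * (if v ∈ I then (1/2:ℝ) else 0) := by
        rw [Finset.mul_sum, Finset.sum_filter]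
        exact Finset.sum_congr rfl (fun I _ => by split <;> ring)
    _ ≤ _ := Finset.sum_le_sum (fun I _ => key I)
end
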